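/- For the TRW coframe and connection, the vector part of the torsion, V_a := T^b_{ba} (trace of the frame-index torsion tensor), satisfies V_1 = −3(ȧ/a + W₁) and V_2 = V_3 = V_4 = 0 at every point of U; i.e. the vector torsion one-form is V = −3(ȧ(t)/a(t) + W₁(t)) h¹. -/

import Mathlib

/-!
Both the coframe and the inverse frame are diagonal and every `ω_μ` has zero diagonal, so for
`B ≠ A` only two terms of `T^B_{BA}` survive: `ω^B_{AB} h^A_A − ∂_A h^B_B`, and
`V_A = h_A^A ∑_B h_B^B T^B_{BA}`. For spatial `A` these two terms cancel: the `χ` and `cos θ`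
parts of the connection are exactly the derivatives of the spatial coframe. For `A = t`, each of
the three spatial `B` contributes `−(ȧ/a + W₁)`, because `∂_t h^B_B = (ȧ/a) h^B_B` and
`ω^B_{tB} = −W₁ h^B_B`.

Frame indices `1, …, 4` and the coordinates `t, r, θ, φ` are the `Fin 4` indices `0, …, 3`.
-/

open Real
open scoped ContDiff

noncomputable section

/-- Partial derivative in the μ-th coordinate direction. -/
def pd (μ : Fin 4) (f : (Fin 4 → ℝ) → ℝ) (x : Fin 4 → ℝ) : ℝ :=
  fderiv ℝ f x (Pi.single μ 1)

/-- The Minkowski metric η = diag(−1,1,1,1) on frame indices. -/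
def eta : Matrix (Fin 4) (Fin 4) ℝ := Matrix.diagonal ![-1, 1, 1, 1]

/-- The TRW coframe h^a_μ = diag(1, a/χ, a r, a r sinθ), χ = √(1 − k r²);
rows are frame indices a, columns are coordinate indices μ. -/
def hco (k : ℝ) (a : ℝ → ℝ) (x : Fin 4 → ℝ) : Matrix (Fin 4) (Fin 4) ℝ :=
  Matrix.diagonal
    ![1, a (x 0) / Real.sqrt (1 - k * (x 1) ^ 2),
      a (x 0) * (x 1), a (x 0) * (x 1) * Real.sin (x 2)]

/-- The inverse frame h_a^μ = diag(1, χ/a, 1/(a r), 1/(a r sinθ));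
rows are frame indices a, columns are coordinate indices μ. -/
def hin (k : ℝ) (a : ℝ → ℝ) (x : Fin 4 → ℝ) : Matrix (Fin 4) (Fin 4) ℝ :=
  Matrix.diagonal
    ![1, Real.sqrt (1 - k * (x 1) ^ 2) / a (x 0),
      1 / (a (x 0) * (x 1)), 1 / (a (x 0) * (x 1) * Real.sin (x 2))]

/-- The matrices ω_μ = (ω^a_{bμ}) of the TRW connection, obtained from the
antisymmetric one-forms ω_{12} = W₁(a/χ) dr, ω_{13} = W₁ a r dθ,
ω_{14} = W₁ a r sinθ dφ, ω_{23} = −χ dθ + W₂ a r sinθ dφ,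
ω_{24} = −W₂ a r dθ − χ sinθ dφ, ω_{34} = W₂(a/χ) dr − cosθ dφ,
via ω^a_{bμ} = η^{ac} ω_{cbμ}. -/
def omegaTRW (k : ℝ) (a W₁ W₂ : ℝ → ℝ) (μ : Fin 4) (x : Fin 4 → ℝ) :
    Matrix (Fin 4) (Fin 4) ℝ :=
  let t := x 0
  let r := x 1
  let θ := x 2
  let χ := Real.sqrt (1 - k * r ^ 2)
  ![(0 : Matrix (Fin 4) (Fin 4) ℝ),
    !![0, -(W₁ t * a t / χ), 0, 0;
       -(W₁ t * a t / χ), 0, 0, 0;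
       0, 0, 0, W₂ t * a t / χ;
       0, 0, -(W₂ t * a t / χ), 0],
    !![0, 0, -(W₁ t * a t * r), 0;
       0, 0, -χ, -(W₂ t * a t * r);
       -(W₁ t * a t * r), χ, 0, 0;
       0, W₂ t * a t * r, 0, 0],
    !![0, 0, 0, -(W₁ t * a t * r * Real.sin θ);
       0, 0, W₂ t * a t * r * Real.sin θ, -(χ * Real.sin θ);
       0, -(W₂ t * a t * r * Real.sin θ), 0, -Real.cos θ;
       -(W₁ t * a t * r * Real.sin θ), χ * Real.sin θ, Real.cos θ, 0]] μ

/-- Torsion tensor T^a_{μν} = ∂_μ h^a_ν − ∂_ν h^a_μ + ω^a_{bμ} h^b_ν − ω^a_{bν} h^b_μ. -/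
def Tor (k : ℝ) (a W₁ W₂ : ℝ → ℝ) (x : Fin 4 → ℝ) (A μ ν : Fin 4) : ℝ :=
  pd μ (fun y => hco k a y A ν) x - pd ν (fun y => hco k a y A μ) x
    + ∑ b, (omegaTRW k a W₁ W₂ μ x A b * hco k a x b ν
        - omegaTRW k a W₁ W₂ ν x A b * hco k a x b μ)

/-- Frame components of the torsion tensor: T^a_{bc} = T^a_{μν} h_b^μ h_c^ν. -/
def Tfr (k : ℝ) (a W₁ W₂ : ℝ → ℝ) (x : Fin 4 → ℝ) (A B C : Fin 4) : ℝ :=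
  ∑ μ, ∑ ν, Tor k a W₁ W₂ x A μ ν * hin k a x B μ * hin k a x C ν

/-- Vector part of the torsion: V_a = T^b_{ba}. -/
def Vfr (k : ℝ) (a W₁ W₂ : ℝ → ℝ) (x : Fin 4 → ℝ) (A : Fin 4) : ℝ :=
  ∑ B, Tfr k a W₁ W₂ x B B A

theorem pd_eq_deriv_update {f : (Fin 4 → ℝ) → ℝ} {x : Fin 4 → ℝ}
    (hf : DifferentiableAt ℝ f x) (μ : Fin 4) : pd μ f x = deriv (fun s => f (Function.update x μ s)) (x μ) := by
  rw [← Function.update_eq_self μ x] at hf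
  simpa [pd, Function.comp_def] using
    (hf.hasFDerivAt.comp_hasDerivAt (x μ) (hasDerivAt_update x μ (x μ))).deriv.symm

section TRW

variable {k : ℝ} {a W₁ W₂ : ℝ → ℝ} {x : Fin 4 → ℝ}

theorem omegaTRW_apply_self (μ B : Fin 4) : omegaTRW k a W₁ W₂ μ x B B = 0 := by
  fin_cases μ <;> fin_cases B <;> simp [omegaTRW]

theorem Tor_same (A μ : Fin 4) : Tor k a W₁ W₂ x A μ μ = 0 := by
  simp [Tor]

theorem Tor_self_of_ne {A B : Fin 4} (hBA : B ≠ A) :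
    Tor k a W₁ W₂ x B B A =
      omegaTRW k a W₁ W₂ B x B A * hco k a x A A - pd A (fun y => hco k a y B B) x := by
  have hoff : pd B (fun y => hco k a y B A) x = 0 := by
    simp [pd, hco, Matrix.diagonal_apply_ne _ hBA]
  rw [Tor, hoff]
  simp only [hco, Matrix.diagonal_apply, mul_ite, mul_zero, Finset.sum_sub_distrib,
    Finset.sum_ite_eq', Finset.mem_univ, if_true, omegaTRW_apply_self, zero_mul]
  ring

theorem Vfr_eq_sum (A : Fin 4) :
    Vfr k a W₁ W₂ x A = ∑ B, Tor k a W₁ W₂ x B B A * hin k a x B B * hin k a x A A := by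
  simp [Vfr, Tfr, hin, Matrix.diagonal_apply]

theorem hin_mul_hco_self (ha0 : a (x 0) ≠ 0) (hr : x 1 ≠ 0) (hsin : sin (x 2) ≠ 0)
    (hk : 0 < 1 - k * x 1 ^ 2) (B : Fin 4) : hin k a x B B * hco k a x B B = 1 := by
  have hχ : √(1 - k * x 1 ^ 2) ≠ 0 := (Real.sqrt_pos.2 hk).ne'
  fin_cases B <;> simp [hin, hco] <;> field_simp

theorem omegaTRW_self_zero {B : Fin 4} (hB : B ≠ 0) :
    omegaTRW k a W₁ W₂ B x B 0 = -W₁ (x 0) * hco k a x B B := by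
  fin_cases B <;> simp_all [omegaTRW, hco] <;> ring

theorem differentiableAt_hco_self (ha : DifferentiableAt ℝ a (x 0)) (hk : 0 < 1 - k * x 1 ^ 2)
    (B : Fin 4) : DifferentiableAt ℝ (fun y => hco k a y B B) x := by
  have hk' : 1 - k * x 1 ^ 2 ≠ 0 := hk.ne'
  have hχ : √(1 - k * x 1 ^ 2) ≠ 0 := (Real.sqrt_pos.2 hk).ne'
  fin_cases B <;> simp [hco] <;> fun_prop (disch := assumption)

theorem pd_zero_hco_self (ha : DifferentiableAt ℝ a (x 0)) (ha0 : a (x 0) ≠ 0)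
    (hk : 0 < 1 - k * x 1 ^ 2) {B : Fin 4} (hB : B ≠ 0) :
    pd 0 (fun y => hco k a y B B) x = deriv a (x 0) / a (x 0) * hco k a x B B := by
  rw [pd_eq_deriv_update (differentiableAt_hco_self ha hk B)]
  fin_cases B <;> simp_all [hco] <;> field_simp

theorem Tor_self_eq_zero_of_ne_zero (ha : DifferentiableAt ℝ a (x 0)) (hk : 0 < 1 - k * x 1 ^ 2)
    {A : Fin 4} (hA : A ≠ 0) (B : Fin 4) : Tor k a W₁ W₂ x B B A = 0 := by
  obtain rfl | hBA := eq_or_ne B A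
  · exact Tor_same B B
  have hχ : √(1 - k * x 1 ^ 2) ≠ 0 := (Real.sqrt_pos.2 hk).ne'
  rw [Tor_self_of_ne hBA, sub_eq_zero, pd_eq_deriv_update (differentiableAt_hco_self ha hk B)]
  fin_cases A <;> fin_cases B <;> simp_all [hco, omegaTRW] <;> field_simp

theorem Vfr_zero (ha : DifferentiableAt ℝ a (x 0)) (ha0 : a (x 0) ≠ 0) (hr : x 1 ≠ 0)
    (hsin : sin (x 2) ≠ 0) (hk : 0 < 1 - k * x 1 ^ 2) :
    Vfr k a W₁ W₂ x 0 = -3 * (deriv a (x 0) / a (x 0) + W₁ (x 0)) := by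
  have hspatial : ∀ B : Fin 4, B ≠ 0 →
      Tor k a W₁ W₂ x B B 0 * hin k a x B B = -(deriv a (x 0) / a (x 0) + W₁ (x 0)) := by
    intro B hB
    have hco00 : hco k a x 0 0 = 1 := by simp [hco]
    rw [Tor_self_of_ne hB, omegaTRW_self_zero hB, pd_zero_hco_self ha ha0 hk hB, hco00]
    linear_combination (-(deriv a (x 0) / a (x 0) + W₁ (x 0))) * hin_mul_hco_self ha0 hr hsin hk B
  have hin00 : hin k a x 0 0 = 1 := by simp [hin]
  rw [Vfr_eq_sum, Fin.sum_univ_four, Tor_same, hin00]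
  simp only [mul_one, hspatial 1 (by decide), hspatial 2 (by decide), hspatial 3 (by decide)]
  ring

theorem Vfr_of_ne_zero (ha : DifferentiableAt ℝ a (x 0)) (hk : 0 < 1 - k * x 1 ^ 2) {A : Fin 4}
    (hA : A ≠ 0) : Vfr k a W₁ W₂ x A = 0 := by
  simp [Vfr_eq_sum, Tor_self_eq_zero_of_ne_zero ha hk hA]

end TRW

theorem TRW_vector_torsion_general (k : ℝ) (a W₁ W₂ : ℝ → ℝ)
    (ha : ContDiff ℝ ∞ a) (hapos : ∀ t, 0 < a t)
    (x : Fin 4 → ℝ) (hr : 0 < x 1) (hθ₁ : 0 < x 2) (hθ₂ : x 2 < Real.pi)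
    (hk : 0 < 1 - k * (x 1) ^ 2) :
    Vfr k a W₁ W₂ x 0 = -3 * (deriv a (x 0) / a (x 0) + W₁ (x 0)) ∧
    Vfr k a W₁ W₂ x 1 = 0 ∧
    Vfr k a W₁ W₂ x 2 = 0 ∧
    Vfr k a W₁ W₂ x 3 = 0 := by
  have hda : DifferentiableAt ℝ a (x 0) := ha.differentiable (by simp) (x 0)
  have hsin : sin (x 2) ≠ 0 := (sin_pos_of_pos_of_lt_pi hθ₁ hθ₂).ne'
  exact ⟨Vfr_zero hda (hapos _).ne' hr.ne' hsin hk, Vfr_of_ne_zero hda hk (by decide),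
    Vfr_of_ne_zero hda hk (by decide), Vfr_of_ne_zero hda hk (by decide)⟩

/-- The vector torsion of the TRW geometry: V₁ = −3(ȧ/a + W₁), V₂ = V₃ = V₄ = 0,
i.e. V = −3(ȧ/a + W₁) h¹. -/
theorem TRW_vector_torsion (k : ℝ) (a W₁ W₂ : ℝ → ℝ)
    (ha : ContDiff ℝ ∞ a) (hapos : ∀ t, 0 < a t)
    (hW₁ : ContDiff ℝ ∞ W₁) (hW₂ : ContDiff ℝ ∞ W₂)
    (x : Fin 4 → ℝ) (hr : 0 < x 1) (hθ₁ : 0 < x 2) (hθ₂ : x 2 < Real.pi)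
    (hk : 0 < 1 - k * (x 1) ^ 2) :
    Vfr k a W₁ W₂ x 0 = -3 * (deriv a (x 0) / a (x 0) + W₁ (x 0)) ∧
    Vfr k a W₁ W₂ x 1 = 0 ∧
    Vfr k a W₁ W₂ x 2 = 0 ∧
    Vfr k a W₁ W₂ x 3 = 0 :=
  TRW_vector_torsion_general k a W₁ W₂ ha hapos x hr hθ₁ hθ₂ hk

end
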